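/- arXiv:1205.2582 — 7 statements merged into one kernel-verified Lean document; each statement's English description precedes it below -/
import Mathlib

section
/- With the notation of the previous context (a ≥ 0, ε > 0, n ≠ 0), the time derivative satisfies |Ḣ_n(t)| ≤ 1 for all t ≥ 0, where Ḣ_n(t) = e^{-h_n t} cosh(ω_n t) - h_n H_n(t). -/
/-!
Writing `k = n²`, in each of the three regimes `H_n = e^{-h t} S(t)` with `S(0) = 0`, `S'(0) = 1`
and `S'' = (h² - k) S`, so `H_n` solves `H'' + 2h H' + k H = 0`. Along such a solution the energy
`H'² + k H²` has derivative `-4h H'² ≤ 0`; it starts at `1`, hence `H'² ≤ 1` for `t ≥ 0`.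
-/

/-- `h_n = (a + ε n²)/2`. -/
noncomputable def hcoef (a ε : ℝ) (n : ℤ) : ℝ := (a + ε * (n : ℝ) ^ 2) / 2

/-- The real-valued fundamental oscillator solution `H_n(t)`:
`e^{-h t} sinh(ω t)/ω` when `ω² = h² - n² > 0`,
`e^{-h t} sin(|ω| t)/|ω|` when `h² - n² < 0`, and `t e^{-h t}` when `h² = n²`. -/
noncomputable def Hfun (a ε : ℝ) (n : ℤ) (t : ℝ) : ℝ :=
  if 0 < (hcoef a ε n) ^ 2 - (n : ℝ) ^ 2 then
    Real.exp (-(hcoef a ε n) * t) *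
      Real.sinh (Real.sqrt ((hcoef a ε n) ^ 2 - (n : ℝ) ^ 2) * t) /
      Real.sqrt ((hcoef a ε n) ^ 2 - (n : ℝ) ^ 2)
  else if (hcoef a ε n) ^ 2 - (n : ℝ) ^ 2 < 0 then
    Real.exp (-(hcoef a ε n) * t) *
      Real.sin (Real.sqrt ((n : ℝ) ^ 2 - (hcoef a ε n) ^ 2) * t) /
      Real.sqrt ((n : ℝ) ^ 2 - (hcoef a ε n) ^ 2)
  else Real.exp (-(hcoef a ε n) * t) * t

/-- `n̄ = 1 + ⌊2/ε⌋`. -/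
noncomputable def nbar (ε : ℝ) : ℤ := 1 + ⌊(2 : ℝ) / ε⌋

open Real

section DampedOscillator

variable {h k : ℝ} {H H' : ℝ → ℝ}

lemma antitone_energy_of_damped (hh : 0 ≤ h) (hH : ∀ s, HasDerivAt H (H' s) s)
    (hH' : ∀ s, HasDerivAt H' (-(2 * h) * H' s - k * H s) s) :
    Antitone fun s => H' s ^ 2 + k * H s ^ 2 := by
  refine antitone_of_hasDerivAt_nonpos (f' := fun s => -(4 * h) * H' s ^ 2) (fun s => ?_)
    fun s => mul_nonpos_of_nonpos_of_nonneg (by linarith) (sq_nonneg _)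
  exact (((hH' s).pow 2).add (((hH s).pow 2).const_mul k)).congr_deriv (by ring)

lemma abs_le_one_of_damped (hh : 0 ≤ h) (hk : 0 ≤ k) (hH : ∀ s, HasDerivAt H (H' s) s)
    (hH' : ∀ s, HasDerivAt H' (-(2 * h) * H' s - k * H s) s) (h0 : H 0 = 0) (h1 : H' 0 = 1)
    {t : ℝ} (ht : 0 ≤ t) : |H' t| ≤ 1 := by
  have henergy := antitone_energy_of_damped hh hH hH' ht
  simp only [h0, h1] at henergy
  rw [abs_le_one_iff_mul_self_le_one]
  nlinarith [mul_nonneg hk (sq_nonneg (H t))]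

variable {S S' : ℝ → ℝ}

lemma abs_deriv_exp_mul_le_one (hh : 0 ≤ h) (hk : 0 ≤ k) (hS : ∀ s, HasDerivAt S (S' s) s)
    (hS' : ∀ s, HasDerivAt S' ((h ^ 2 - k) * S s) s) (h0 : S 0 = 0) (h1 : S' 0 = 1)
    {t : ℝ} (ht : 0 ≤ t) : |deriv (fun s => exp (-h * s) * S s) t| ≤ 1 := by
  have hexp (s : ℝ) : HasDerivAt (fun u => exp (-h * u)) (-h * exp (-h * s)) s := by
    simpa [mul_comm] using ((hasDerivAt_id s).const_mul (-h)).exp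
  have hH (s : ℝ) : HasDerivAt (fun u => exp (-h * u) * S u) (exp (-h * s) * (S' s - h * S s)) s :=
    ((hexp s).mul (hS s)).congr_deriv (by ring)
  have hH' (s : ℝ) : HasDerivAt (fun u => exp (-h * u) * (S' u - h * S u))
      (-(2 * h) * (exp (-h * s) * (S' s - h * S s)) - k * (exp (-h * s) * S s)) s :=
    ((hexp s).mul ((hS' s).sub ((hS s).const_mul h))).congr_deriv
      (by simp only [Pi.sub_apply]; ring)
  rw [(hH t).deriv]
  exact abs_le_one_of_damped hh hk hH hH' (by simp [h0]) (by simp [h0, h1]) ht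

end DampedOscillator

section Regimes

variable {h k t : ℝ}

lemma abs_deriv_exp_mul_sinh_le_one (hh : 0 ≤ h) (hk : 0 ≤ k) (hD : 0 < h ^ 2 - k) (ht : 0 ≤ t) :
    |deriv (fun s => exp (-h * s) * sinh (√(h ^ 2 - k) * s) / √(h ^ 2 - k)) t| ≤ 1 := by
  set ω := √(h ^ 2 - k)
  have hω : ω ≠ 0 := (sqrt_pos.mpr hD).ne'
  have hω2 : ω ^ 2 = h ^ 2 - k := sq_sqrt hD.le
  simp only [mul_div_assoc]
  refine abs_deriv_exp_mul_le_one hh hk (S' := fun s => cosh (ω * s)) (fun s => ?_) (fun s => ?_)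
    (by simp) (by simp) ht
  · exact (((hasDerivAt_id' s).const_mul ω).sinh.div_const ω).congr_deriv (by field_simp)
  · exact ((hasDerivAt_id' s).const_mul ω).cosh.congr_deriv (by rw [← hω2]; field_simp)

lemma abs_deriv_exp_mul_sin_le_one (hh : 0 ≤ h) (hk : 0 ≤ k) (hD : h ^ 2 - k < 0) (ht : 0 ≤ t) :
    |deriv (fun s => exp (-h * s) * sin (√(k - h ^ 2) * s) / √(k - h ^ 2)) t| ≤ 1 := by
  set ω := √(k - h ^ 2)
  have hω : ω ≠ 0 := (sqrt_pos.mpr (by linarith)).ne'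
  have hω2 : ω ^ 2 = k - h ^ 2 := sq_sqrt (by linarith)
  simp only [mul_div_assoc]
  refine abs_deriv_exp_mul_le_one hh hk (S' := fun s => cos (ω * s)) (fun s => ?_)
    (fun s => ?_) (by simp) (by simp) ht
  · exact (((hasDerivAt_id' s).const_mul ω).sin.div_const ω).congr_deriv (by field_simp)
  · exact ((hasDerivAt_id' s).const_mul ω).cos.congr_deriv
      (by rw [show h ^ 2 - k = -ω ^ 2 by linarith]; field_simp)

lemma abs_deriv_exp_mul_id_le_one (hh : 0 ≤ h) (hk : 0 ≤ k) (hD : h ^ 2 - k = 0) (ht : 0 ≤ t) :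
    |deriv (fun s => exp (-h * s) * s) t| ≤ 1 :=
  abs_deriv_exp_mul_le_one hh hk (S' := fun _ => 1) hasDerivAt_id
    (fun s => by simpa [hD] using hasDerivAt_const s (1 : ℝ)) rfl rfl ht

end Regimes

theorem stmt4_general (a ε : ℝ) (ha : 0 ≤ a) (hε : 0 < ε) (n : ℤ)
    (t : ℝ) (ht : 0 ≤ t) : |deriv (Hfun a ε n) t| ≤ 1 := by
  have hh : 0 ≤ hcoef a ε n := by unfold hcoef; positivity
  have hk : (0 : ℝ) ≤ (n : ℝ) ^ 2 := sq_nonneg _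
  rcases lt_trichotomy ((hcoef a ε n) ^ 2 - (n : ℝ) ^ 2) 0 with hD | hD | hD
  · unfold Hfun
    simp only [if_neg hD.not_gt, if_pos hD]
    exact abs_deriv_exp_mul_sin_le_one hh hk hD ht
  · unfold Hfun
    simp only [hD, lt_irrefl, if_false]
    exact abs_deriv_exp_mul_id_le_one hh hk hD ht
  · unfold Hfun
    simp only [if_pos hD]
    exact abs_deriv_exp_mul_sinh_le_one hh hk hD ht

theorem stmt4 (a ε : ℝ) (ha : 0 ≤ a) (hε : 0 < ε) (n : ℤ) (hn : n ≠ 0)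
    (t : ℝ) (ht : 0 ≤ t) : |deriv (Hfun a ε n) t| ≤ 1 :=
  stmt4_general a ε ha hε n t ht
end

section
/- With a ≥ 0, ε > 0, n ≠ 0 and ω_n real and nonnegative (i.e. h_n ≥ |n|), one has 0 ≤ 1 - Ḣ_n(t) ≤ 2 h_n t for all t ≥ 0. -/
theorem stmt5 (a ε : ℝ) (ha : 0 ≤ a) (hε : 0 < ε) (n : ℤ) (hn : n ≠ 0)
    (hω : |(n : ℝ)| ≤ hcoef a ε n) (t : ℝ) (ht : 0 ≤ t) :
    0 ≤ 1 - deriv (Hfun a ε n) t ∧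
    1 - deriv (Hfun a ε n) t ≤ 2 * hcoef a ε n * t := by
  set h := hcoef a ε n with hh
  have hn1 : (1:ℝ) ≤ |(n:ℝ)| := by
    have : (1:ℤ) ≤ |n| := Int.one_le_abs hn
    calc (1:ℝ) = ((1:ℤ):ℝ) := by norm_num
    _ ≤ ((|n|:ℤ):ℝ) := by exact_mod_cast this
    _ = |(n:ℝ)| := by push_cast; ring
  have hpos : 0 < h := lt_of_lt_of_le (by linarith) hω
  have hD : 0 ≤ h^2 - (n:ℝ)^2 := by
    have := pow_le_pow_left₀ (abs_nonneg ((n:ℝ))) hω 2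
    rw [sq_abs] at this; linarith
  rcases eq_or_lt_of_le hD with hD0 | hDpos
  · -- degenerate case: H(t) = t e^{-ht}
    have hf : Hfun a ε n = fun s => Real.exp (-h * s) * s := by
      funext s
      simp only [Hfun, ← hh, ← hD0]
      norm_num
    have hder : HasDerivAt (fun s => Real.exp (-h*s) * s)
        (Real.exp (-h*t) * -h * t + Real.exp (-h*t) * 1) t := by
      have h1 : HasDerivAt (fun s : ℝ => -h * s) (-h) t := by
        simpa using (hasDerivAt_id t).const_mul (-h)
      exact h1.exp.mul (hasDerivAt_id t)
    rw [hf, hder.deriv]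
    have e0 : 0 < Real.exp (-h*t) := Real.exp_pos _
    have e1 : Real.exp (-h*t) ≤ 1 := Real.exp_le_one_iff.2 (by nlinarith)
    have e2 : 1 - Real.exp (-h*t) ≤ h*t := by
      have := Real.add_one_le_exp (-(h*t))
      rw [neg_mul] at *
      linarith
    constructor
    · nlinarith
    · nlinarith
  · -- oscillator case with ω > 0
    set ω := Real.sqrt (h^2 - (n:ℝ)^2) with hω'
    have hωpos : 0 < ω := Real.sqrt_pos.2 hDpos
    have hω2 : ω^2 = h^2 - (n:ℝ)^2 := Real.sq_sqrt hD
    have hωleh : ω ≤ h := by nlinarith [sq_nonneg ((n:ℝ))]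
    have hf : Hfun a ε n = fun s => Real.exp (-h*s) * Real.sinh (ω*s) / ω := by
      funext s
      simp only [Hfun, ← hh, ← hω', if_pos hDpos]
    have hder : HasDerivAt (fun s => Real.exp (-h*s) * Real.sinh (ω*s) / ω)
        ((Real.exp (-h*t) * -h * Real.sinh (ω*t) +
          Real.exp (-h*t) * (Real.cosh (ω*t) * ω)) / ω) t := by
      have h1 : HasDerivAt (fun s : ℝ => -h * s) (-h) t := by
        simpa using (hasDerivAt_id t).const_mul (-h)
      have h2 : HasDerivAt (fun s : ℝ => ω * s) ω t := by
        simpa using (hasDerivAt_id t).const_mul ω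
      exact (h1.exp.mul h2.sinh).div_const ω
    set A := Real.exp (-h*t) * Real.exp (ω*t) with hA
    set B := Real.exp (-h*t) * Real.exp (-(ω*t)) with hB
    have key : 1 - deriv (Hfun a ε n) t
        = ((h+ω)*(1 - B) - (h-ω)*(1 - A)) / (2*ω) := by
      rw [hf, hder.deriv, Real.sinh_eq, Real.cosh_eq, hA, hB]
      field_simp
      ring
    have hApos : 0 < A := mul_pos (Real.exp_pos _) (Real.exp_pos _)
    have hBpos : 0 < B := mul_pos (Real.exp_pos _) (Real.exp_pos _)
    have hAe : A = Real.exp (-((h-ω)*t)) := by rw [hA, ← Real.exp_add]; ring_nf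
    have hBe : B = Real.exp (-((h+ω)*t)) := by rw [hB, ← Real.exp_add]; ring_nf
    have hA1 : A ≤ 1 := by
      rw [hAe]; exact Real.exp_le_one_iff.2 (by nlinarith)
    have hBA : B ≤ A := by
      rw [hAe, hBe]; exact Real.exp_le_exp.2 (by nlinarith)
    have h1B : 1 - B ≤ (h+ω)*t := by
      have := Real.add_one_le_exp (-((h+ω)*t))
      rw [← hBe] at this; linarith
    have hABd : A - B ≤ 2*ω*t := by
      have hC : B = A * Real.exp (-(2*ω*t)) := by
        rw [hAe, hBe, ← Real.exp_add]; ring_nf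
      have hC1 : 1 - Real.exp (-(2*ω*t)) ≤ 2*ω*t := by
        have := Real.add_one_le_exp (-(2*ω*t)); linarith
      have hC2 : Real.exp (-(2*ω*t)) ≤ 1 := Real.exp_le_one_iff.2 (by nlinarith)
      calc A - B = A * (1 - Real.exp (-(2*ω*t))) := by rw [hC]; ring
      _ ≤ 1 * (2*ω*t) := by
          apply mul_le_mul hA1 hC1 (by linarith) (by norm_num)
      _ = 2*ω*t := by ring
    constructor
    · rw [key]
      apply div_nonneg _ (by linarith)
      have : (h-ω)*(1 - A) ≤ (h+ω)*(1 - B) :=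
        mul_le_mul (by linarith) (by linarith) (by linarith) (by linarith)
      linarith
    · rw [key, div_le_iff₀ (by linarith : (0:ℝ) < 2*ω)]
      have f1 : ((h+ω)-(h-ω))*(1 - B) ≤ ((h+ω)-(h-ω))*((h+ω)*t) :=
        mul_le_mul_of_nonneg_left h1B (by linarith)
      have f2 : (h-ω)*(A - B) ≤ (h-ω)*(2*ω*t) :=
        mul_le_mul_of_nonneg_left hABd (by linarith)
      nlinarith
end

section
/- Let a ≥ 0, ε > 0, n integer with |n| ≥ n̄ := 1 + ⌊2/ε⌋, h_n = (a+εn²)/2 and ω_n = √(h_n² - n²) (real by the previous lemma). Then n²/(2h_n) ≤ h_n - ω_n ≤ n²/h_n ≤ 2/ε and also h_n - ω_n ≤ n²/(2h_n) + n⁴/(2h_n³). -/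
lemma stmt8_aux (h N : ℝ) (hpos : 0 < h) (hN : 0 < N) (hle : N ≤ h^2) :
    h - Real.sqrt (h^2 - N) ≤ N/(2*h) + N^2/(2*h^3) := by
  have hx0 : 0 ≤ N/(2*h) + N^2/(2*h^3) := by positivity
  have hxle : N/(2*h) + N^2/(2*h^3) ≤ N/h := by
    rw [div_add_div _ _ (by positivity) (by positivity),
      div_le_div_iff₀ (by positivity) hpos]
    nlinarith [mul_le_mul_of_nonneg_left hle (by positivity : (0:ℝ) ≤ 2*N*h^2)]
  rcases le_or_gt (h - (N/(2*h) + N^2/(2*h^3))) 0 with hc | hc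
  · have h0 : 0 ≤ Real.sqrt (h^2 - N) := Real.sqrt_nonneg _
    linarith
  · have h2hx : 2*h*(N/(2*h) + N^2/(2*h^3)) = N + N^2/h^2 := by
      field_simp
    have hq : (N/h)^2 = N^2/h^2 := by rw [div_pow]
    have hx2 : (N/(2*h) + N^2/(2*h^3))^2 ≤ N^2/h^2 := by
      rw [← hq]; exact pow_le_pow_left₀ hx0 hxle 2
    have hexp : (h - (N/(2*h) + N^2/(2*h^3)))^2
        = h^2 - 2*h*(N/(2*h) + N^2/(2*h^3)) + (N/(2*h) + N^2/(2*h^3))^2 := by ring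
    have key : (h - (N/(2*h) + N^2/(2*h^3)))^2 ≤ h^2 - N := by linarith
    have hfin : h - (N/(2*h) + N^2/(2*h^3)) ≤ Real.sqrt (h^2 - N) :=
      calc h - (N/(2*h) + N^2/(2*h^3))
          = Real.sqrt ((h - (N/(2*h) + N^2/(2*h^3)))^2) := (Real.sqrt_sq hc.le).symm
        _ ≤ Real.sqrt (h^2 - N) := Real.sqrt_le_sqrt key
    linarith

theorem stmt8 (a ε : ℝ) (ha : 0 ≤ a) (hε : 0 < ε) (n : ℤ) (hn : nbar ε ≤ |n|) :
    (n : ℝ) ^ 2 / (2 * hcoef a ε n) ≤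
      hcoef a ε n - Real.sqrt ((hcoef a ε n) ^ 2 - (n : ℝ) ^ 2) ∧
    hcoef a ε n - Real.sqrt ((hcoef a ε n) ^ 2 - (n : ℝ) ^ 2) ≤
      (n : ℝ) ^ 2 / hcoef a ε n ∧
    (n : ℝ) ^ 2 / hcoef a ε n ≤ 2 / ε ∧
    hcoef a ε n - Real.sqrt ((hcoef a ε n) ^ 2 - (n : ℝ) ^ 2) ≤
      (n : ℝ) ^ 2 / (2 * hcoef a ε n) + (n : ℝ) ^ 4 / (2 * (hcoef a ε n) ^ 3) := by
  set h := hcoef a ε n with hhdef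
  have hne : (2:ℝ)/ε < |(n:ℝ)| := by
    have h1 : ((|n| : ℤ) : ℝ) ≥ ((nbar ε : ℤ) : ℝ) := by exact_mod_cast hn
    have h2 : (2:ℝ)/ε < (nbar ε : ℝ) := by
      unfold nbar; push_cast; linarith [Int.lt_floor_add_one ((2:ℝ)/ε)]
    rw [Int.cast_abs] at h1
    linarith
  have habs_pos : 0 < |(n:ℝ)| := lt_trans (div_pos two_pos hε) hne
  have h2lt : 2 < |(n:ℝ)| * ε := (div_lt_iff₀ hε).mp hne
  have hsq : |(n:ℝ)|^2 = (n:ℝ)^2 := sq_abs _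
  have hN : 2 * |(n:ℝ)| ≤ ε * (n:ℝ)^2 := by nlinarith
  have hh : |(n:ℝ)| ≤ h := by
    rw [hhdef]; unfold hcoef; nlinarith
  have hpos : 0 < h := lt_of_lt_of_le habs_pos hh
  have hn2 : (n:ℝ)^2 ≤ h^2 := by nlinarith [abs_nonneg (n:ℝ)]
  have hn2pos : 0 < (n:ℝ)^2 := by nlinarith
  have hωnn : 0 ≤ h^2 - (n:ℝ)^2 := by linarith
  set ω := Real.sqrt (h^2 - (n:ℝ)^2) with hωdef
  have hω0 : 0 ≤ ω := Real.sqrt_nonneg _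
  have hωsq : ω^2 = h^2 - (n:ℝ)^2 := Real.sq_sqrt hωnn
  have hωle : ω ≤ h := by
    rw [hωdef]
    calc Real.sqrt (h^2 - (n:ℝ)^2) ≤ Real.sqrt (h^2) := Real.sqrt_le_sqrt (by linarith)
    _ = h := Real.sqrt_sq hpos.le
  have key : (h - ω) * (h + ω) = (n:ℝ)^2 := by nlinarith
  refine ⟨?_, ?_, ?_, ?_⟩
  · rw [div_le_iff₀ (by linarith)]; nlinarith
  · rw [le_div_iff₀ hpos]; nlinarith
  · rw [div_le_div_iff₀ hpos hε]; rw [hhdef]; unfold hcoef; nlinarith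
  · have haux := stmt8_aux h ((n:ℝ)^2) hpos hn2pos hn2
    have e : ((n:ℝ)^2)^2 = (n:ℝ)^4 := by ring
    rw [e] at haux
    exact haux
end

section
/- Under the same assumptions (a ≥ 0, ε > 0, |n| ≥ n̄ = 1 + ⌊2/ε⌋), one has |1 + ε(ω_n - h_n)| ≤ (aε + 4)/(ε² n²). -/
set_option maxHeartbeats 1000000 in
theorem stmt9 (a ε : ℝ) (ha : 0 ≤ a) (hε : 0 < ε) (n : ℤ) (hn : nbar ε ≤ |n|) :
    |1 + ε * (Real.sqrt ((hcoef a ε n) ^ 2 - (n : ℝ) ^ 2) - hcoef a ε n)| ≤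
      (a * ε + 4) / (ε ^ 2 * (n : ℝ) ^ 2) := by
  rw [nbar] at hn
  set h : ℝ := hcoef a ε n with hh
  have h2h : 2 * h = a + ε * (n:ℝ)^2 := by rw [hh, hcoef]; ring
  have hx1 : (2:ℝ)/ε < |(n:ℝ)| := by
    have h1 := Int.lt_floor_add_one ((2:ℝ)/ε)
    have h2 : ((1 + ⌊(2 : ℝ) / ε⌋ : ℤ) : ℝ) ≤ |(n:ℝ)| := by
      rw [← Int.cast_abs]; exact_mod_cast hn
    push_cast at h2; linarith
  have hεn : 2 < ε * |(n:ℝ)| := by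
    rw [div_lt_iff₀ hε] at hx1; linarith
  have hx1' : (1:ℝ) ≤ |(n:ℝ)| := by
    have h0 : n ≠ 0 := by rintro rfl; norm_num at hεn
    have h1 : (1:ℤ) ≤ |n| := Int.one_le_abs h0
    exact_mod_cast h1
  have hsq : |(n:ℝ)|^2 = (n:ℝ)^2 := sq_abs _
  have hN1 : (1:ℝ) ≤ (n:ℝ)^2 := by nlinarith
  have hεN : 2 * |(n:ℝ)| < ε * (n:ℝ)^2 := by nlinarith
  have hhx : |(n:ℝ)| < h := by nlinarith
  have hhpos : 0 < h := lt_of_le_of_lt (abs_nonneg _) hhx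
  have hD : 0 < h^2 - (n:ℝ)^2 := by nlinarith
  set ω : ℝ := Real.sqrt (h^2 - (n:ℝ)^2) with hω
  have hω0 : 0 ≤ ω := Real.sqrt_nonneg _
  have hω2 : ω^2 = h^2 - (n:ℝ)^2 := Real.sq_sqrt hD.le
  have hup : 2*h*ω ≤ 2*h^2 - (n:ℝ)^2 := by
    nlinarith [sq_nonneg (2*h*ω - (2*h^2 - (n:ℝ)^2)), sq_nonneg ((n:ℝ)^2),
      mul_nonneg (mul_nonneg (by norm_num : (0:ℝ) ≤ 2) hhpos.le) hω0]
  have hωsq6 : (2*h^3*ω)^2 = 4*h^6*(h^2-(n:ℝ)^2) := by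
    have : (2*h^3*ω)^2 = 4*h^6*ω^2 := by ring
    rw [this, hω2]
  have hsqdiff : (2*h^4 - h^2*(n:ℝ)^2 - (n:ℝ)^4)^2 ≤ (2*h^3*ω)^2 := by
    nlinarith [hωsq6, mul_nonneg (mul_nonneg (sq_nonneg ((n:ℝ)^2))
      (by positivity : (0:ℝ) ≤ 3*h^2+(n:ℝ)^2)) hD.le]
  have hlow : 2*h^4 - h^2*(n:ℝ)^2 - (n:ℝ)^4 ≤ 2*h^3*ω := by
    rcases le_or_gt (2*h^4 - h^2*(n:ℝ)^2 - (n:ℝ)^4) 0 with hb | hb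
    · exact hb.trans (by positivity)
    · nlinarith [hsqdiff, hb, mul_nonneg (mul_nonneg (by norm_num : (0:ℝ) ≤ 2)
        (pow_pos hhpos 3).le) hω0]
  have hden : 0 < ε^2 * (n:ℝ)^2 := by positivity
  have hcube : ε^3*(n:ℝ)^6 ≤ 8*h^3 := by
    have h1 : (ε * (n:ℝ)^2)^3 ≤ (2*h)^3 := by
      apply pow_le_pow_left₀ (by positivity)
      nlinarith
    nlinarith [h1]
  have H2 : ε^2*(n:ℝ)^2*h^2*(2*h) = ε^2*(n:ℝ)^2*h^2*(a+ε*(n:ℝ)^2) := by rw [h2h]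
  have H2' : ε^2*(n:ℝ)^2*(2*h) = ε^2*(n:ℝ)^2*(a+ε*(n:ℝ)^2) := by rw [h2h]
  have H5 : (a*ε+4)*(2*h) = (a*ε+4)*(a+ε*(n:ℝ)^2) := by rw [h2h]
  rw [abs_le]
  constructor
  · rw [neg_le, le_div_iff₀ hden]
    have key1 : (-(1 + ε*(ω - h))) * (ε^2*(n:ℝ)^2) * (2*h^3) ≤ (a*ε+4) * (2*h^3) := by
      linarith [mul_le_mul_of_nonneg_left hlow (by positivity : (0:ℝ) ≤ ε^3*(n:ℝ)^2),
        H2, hcube,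
        mul_nonneg (mul_nonneg (mul_nonneg ha (sq_nonneg ε)) (sq_nonneg (n:ℝ))) (sq_nonneg h),
        mul_nonneg (mul_nonneg ha hε.le) (pow_pos hhpos 3).le]
    exact le_of_mul_le_mul_right key1 (by positivity : (0:ℝ) < 2*h^3)
  · rw [le_div_iff₀ hden]
    have key2 : (1 + ε*(ω - h)) * (ε^2*(n:ℝ)^2) * (2*h) ≤ (a*ε+4) * (2*h) := by
      linarith [mul_le_mul_of_nonneg_left hup (by positivity : (0:ℝ) ≤ ε^3*(n:ℝ)^2),
        H2', H5, mul_nonneg (mul_nonneg ha ha) hε.le, ha,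
        mul_nonneg hε.le (sq_nonneg (n:ℝ))]
    exact le_of_mul_le_mul_right key2 (by positivity : (0:ℝ) < 2*h)
end

section
/- Let a ≥ 0, ε > 0, and n an integer with |n| ≥ n̄ = 1 + ⌊2/ε⌋, so ω_n is real and positive. Then H_n attains its maximum absolute value at the unique critical time, and |H_n(t)| ≤ (2/ε)·(1/n²) for all t ≥ 0. -/
/-! For `|n| ≥ n̄` we have `ε|n| > 2`, hence `h_n ≥ εn²/2 > |n|` and `0 < ω_n < h_n`, so that
`H_n(t) = e^{-h t} sinh(ω t)/ω` is nonnegative on `[0, ∞)`, vanishes at `0` and decays like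
`e^{-(h-ω)t}`. By the extreme value theorem it attains its maximum at an interior point, which is
therefore critical. The bound follows from `sinh(ωt)/ω ≤ sinh(ht)/h` (the derivative of
`ω sinh(hx) - h sinh(ωx)` is `ωh (cosh(hx) - cosh(ωx)) ≥ 0`) and `e^{-x} sinh x ≤ 1/2`, which give
`H_n ≤ 1/(2h_n) ≤ 1/(εn²)`. -/

open Real Set Filter Topology

theorem Continuous.exists_isMaxOn_Ici_of_tendsto {α : Type*} [LinearOrder α] [TopologicalSpace α]
    [OrderTopology α] {f : ℝ → α} (hf : Continuous f) {a x₀ : ℝ} {b : α} (hx₀ : a ≤ x₀)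
    (hlim : Tendsto f atTop (𝓝 b)) (hb : b < f x₀) : ∃ x ∈ Ici a, IsMaxOn f (Ici a) x := by
  refine hf.continuousOn.exists_isMaxOn' isClosed_Ici hx₀ ?_
  rw [cocompact_eq_atBot_atTop, inf_sup_right, (disjoint_atBot_principal_Ici a).eq_bot, bot_sup_eq]
  exact (hlim.eventually <| ge_mem_nhds hb).filter_mono inf_le_left

theorem Real.sinh_mul_div_le_sinh_mul_div {w h t : ℝ} (hw : 0 < w) (hwh : w ≤ h) (ht : 0 ≤ t) :
    sinh (w * t) / w ≤ sinh (h * t) / h := by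
  have hh : 0 < h := hw.trans_le hwh
  have hderiv (x : ℝ) : HasDerivAt (fun x => w * sinh (h * x) - h * sinh (w * x))
      (w * h * (cosh (h * x) - cosh (w * x))) x := by
    have hsinh (c : ℝ) : HasDerivAt (fun x => sinh (c * x)) (cosh (c * x) * c) x := by
      simpa using ((hasDerivAt_id x).const_mul c).sinh
    exact (((hsinh h).const_mul w).sub ((hsinh w).const_mul h)).congr_deriv (by ring)
  have hmono := monotone_of_hasDerivAt_nonneg hderiv fun x => by
    have : cosh (w * x) ≤ cosh (h * x) := by
      rw [cosh_le_cosh, abs_mul, abs_mul, abs_of_pos hw, abs_of_pos hh]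
      exact mul_le_mul_of_nonneg_right hwh (abs_nonneg x)
    have := sub_nonneg.2 this
    positivity
  have := hmono ht
  simp only [mul_zero, sinh_zero, sub_zero] at this
  rw [div_le_div_iff₀ hw hh]
  linarith

theorem Real.exp_neg_mul_sinh_le (x : ℝ) : exp (-x) * sinh x ≤ 1 / 2 := by
  rw [sinh_eq, mul_div_assoc', mul_sub, ← exp_add, ← exp_add, neg_add_cancel, exp_zero]
  have := exp_pos (-x + -x)
  linarith

noncomputable def dampedSinh (h w t : ℝ) : ℝ := exp (-h * t) * sinh (w * t) / w

section DampedSinh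

variable {h w : ℝ}

theorem dampedSinh_eq (t : ℝ) :
    dampedSinh h w t = (exp (-(h - w) * t) - exp (-(h + w) * t)) / (2 * w) := by
  rw [dampedSinh, sinh_eq, show -(h - w) * t = -h * t + w * t by ring,
    show -(h + w) * t = -h * t + -(w * t) by ring, exp_add, exp_add]
  ring

theorem continuous_dampedSinh : Continuous (dampedSinh h w) := by
  unfold dampedSinh; fun_prop

theorem dampedSinh_nonneg (hw : 0 < w) {t : ℝ} (ht : 0 ≤ t) : 0 ≤ dampedSinh h w t := by
  have : 0 ≤ sinh (w * t) := sinh_nonneg_iff.2 (by positivity)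
  unfold dampedSinh; positivity

theorem dampedSinh_pos (hw : 0 < w) {t : ℝ} (ht : 0 < t) : 0 < dampedSinh h w t := by
  have : 0 < sinh (w * t) := sinh_pos_iff.2 (by positivity)
  unfold dampedSinh; positivity

theorem dampedSinh_le (hw : 0 < w) (hwh : w ≤ h) {t : ℝ} (ht : 0 ≤ t) :
    dampedSinh h w t ≤ 1 / (2 * h) := by
  have hh : 0 < h := hw.trans_le hwh
  calc dampedSinh h w t = exp (-h * t) * (sinh (w * t) / w) := mul_div_assoc _ _ _
    _ ≤ exp (-h * t) * (sinh (h * t) / h) :=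
      mul_le_mul_of_nonneg_left (sinh_mul_div_le_sinh_mul_div hw hwh ht) (exp_pos _).le
    _ = (exp (-(h * t)) * sinh (h * t)) / h := by ring_nf
    _ ≤ 1 / 2 / h := by gcongr; exact exp_neg_mul_sinh_le _
    _ = 1 / (2 * h) := by ring

theorem tendsto_dampedSinh_atTop (hwh : |w| < h) : Tendsto (dampedSinh h w) atTop (𝓝 0) := by
  have hexp {c : ℝ} (hc : 0 < c) : Tendsto (fun t => exp (-c * t)) atTop (𝓝 0) :=
    tendsto_exp_atBot.comp <| tendsto_id.const_mul_atTop_of_neg (neg_neg_of_pos hc)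
  have hlim := ((hexp (sub_pos.2 (abs_lt.1 hwh).2)).sub
    (hexp (by linarith [(abs_lt.1 hwh).1] : 0 < h + w))).div_const (2 * w)
  rw [sub_zero, zero_div] at hlim
  exact hlim.congr fun t => (dampedSinh_eq t).symm

theorem exists_isMaxOn_dampedSinh (hw : 0 < w) (hwh : w < h) :
    ∃ t, 0 < t ∧ IsMaxOn (dampedSinh h w) (Ici 0) t := by
  obtain ⟨t, ht, hmax⟩ := continuous_dampedSinh.exists_isMaxOn_Ici_of_tendsto zero_le_one
    (tendsto_dampedSinh_atTop (by rwa [abs_of_pos hw])) (dampedSinh_pos hw one_pos)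
  refine ⟨t, lt_of_le_of_ne ht ?_, hmax⟩
  rintro rfl
  have := (dampedSinh_pos (h := h) hw one_pos).trans_le (hmax (mem_Ici.2 zero_le_one))
  simp [dampedSinh] at this

end DampedSinh

theorem Hfun_eq_dampedSinh {a ε : ℝ} {n : ℤ} (hdisc : 0 < hcoef a ε n ^ 2 - (n : ℝ) ^ 2) :
    Hfun a ε n = dampedSinh (hcoef a ε n) √(hcoef a ε n ^ 2 - (n : ℝ) ^ 2) := by
  funext t
  simp only [Hfun, if_pos hdisc, dampedSinh]

theorem two_div_lt_abs_of_nbar_le {ε : ℝ} {n : ℤ} (hn : nbar ε ≤ |n|) :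
    2 / ε < |(n : ℝ)| := by
  have hnR : ((nbar ε : ℤ) : ℝ) ≤ |(n : ℝ)| := by exact_mod_cast hn
  have := Int.lt_floor_add_one (2 / ε)
  rw [nbar, Int.cast_add, Int.cast_one] at hnR
  linarith

theorem abs_lt_hcoef {a ε : ℝ} (ha : 0 ≤ a) (hε : 0 < ε) {n : ℤ} (hn : 2 / ε < |(n : ℝ)|) :
    |(n : ℝ)| < hcoef a ε n := by
  have h2 : 2 < ε * |(n : ℝ)| := by rwa [div_lt_iff₀' hε] at hn
  have : |(n : ℝ)| * 2 < |(n : ℝ)| * (ε * |(n : ℝ)|) :=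
    mul_lt_mul_of_pos_left h2 ((div_pos two_pos hε).trans hn)
  rw [hcoef, ← sq_abs]
  nlinarith

theorem one_div_two_mul_hcoef_le {a ε : ℝ} (ha : 0 ≤ a) (hε : 0 < ε) {n : ℤ} (hn : (n : ℝ) ≠ 0) :
    1 / (2 * hcoef a ε n) ≤ 2 / ε * (1 / (n : ℝ) ^ 2) := by
  have hn2 : 0 < (n : ℝ) ^ 2 := by positivity
  rw [div_mul_div_comm, mul_one, div_le_div_iff₀ (by unfold hcoef; positivity) (by positivity),
    hcoef]
  nlinarith

theorem stmt10 (a ε : ℝ) (ha : 0 ≤ a) (hε : 0 < ε) (n : ℤ) (hn : nbar ε ≤ |n|) :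
    (∃ tn : ℝ, 0 ≤ tn ∧ deriv (Hfun a ε n) tn = 0 ∧
      ∀ t : ℝ, 0 ≤ t → |Hfun a ε n t| ≤ |Hfun a ε n tn|) ∧
    ∀ t : ℝ, 0 ≤ t → |Hfun a ε n t| ≤ (2 / ε) * (1 / (n : ℝ) ^ 2) := by
  have hn' := two_div_lt_abs_of_nbar_le hn
  have hnh := abs_lt_hcoef ha hε hn'
  have hn0 : (n : ℝ) ≠ 0 := abs_pos.1 ((div_pos two_pos hε).trans hn')
  set h := hcoef a ε n
  have hh : 0 < h := (abs_nonneg _).trans_lt hnh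
  have hdisc : 0 < h ^ 2 - (n : ℝ) ^ 2 := by
    rw [sub_pos, ← sq_abs (n : ℝ)]; exact pow_lt_pow_left₀ hnh (abs_nonneg _) two_ne_zero
  have hw : 0 < √(h ^ 2 - (n : ℝ) ^ 2) := sqrt_pos.2 hdisc
  have hwh : √(h ^ 2 - (n : ℝ) ^ 2) < h := by
    rw [sqrt_lt' hh]; linarith [sq_pos_of_ne_zero hn0]
  rw [Hfun_eq_dampedSinh hdisc]
  refine ⟨?_, fun t ht => ?_⟩
  · obtain ⟨tn, htn, hmax⟩ := exists_isMaxOn_dampedSinh hw hwh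
    refine ⟨tn, htn.le, (hmax.isLocalMax (Ici_mem_nhds htn)).deriv_eq_zero, fun t ht => ?_⟩
    rw [abs_of_nonneg (dampedSinh_nonneg hw ht), abs_of_nonneg (dampedSinh_nonneg hw htn.le)]
    exact hmax ht
  · rw [abs_of_nonneg (dampedSinh_nonneg hw ht)]
    exact (dampedSinh_le hw hwh.le ht).trans (one_div_two_mul_hcoef_le ha hε hn0)
end

section
/- Let a ≥ 0, ε > 0 and n a nonzero integer with |n| ≤ n̄ (so that ω_n may be imaginary). Then |H_n(t)| ≤ 1/|n| for all t ≥ 0. -/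
lemma convexOn_sinh : ConvexOn ℝ (Set.Ici (0:ℝ)) Real.sinh := by
  apply convexOn_of_deriv2_nonneg (convex_Ici 0) Real.continuous_sinh.continuousOn
    Real.differentiable_sinh.differentiableOn
  · rw [Real.deriv_sinh]
    exact Real.differentiable_cosh.differentiableOn
  · intro x hx
    simp only [Function.iterate_succ, Function.iterate_zero, Function.comp_apply, id_eq,
      Real.deriv_sinh, Real.deriv_cosh]
    rw [interior_Ici] at hx
    exact (Real.sinh_nonneg_iff).2 hx.le

lemma sinh_mul_le {c x : ℝ} (hc0 : 0 ≤ c) (hc1 : c ≤ 1) (hx : 0 ≤ x) :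
    Real.sinh (c * x) ≤ c * Real.sinh x := by
  have h := convexOn_sinh.2 (Set.mem_Ici.2 hx) (Set.mem_Ici.2 le_rfl) hc0
    (by linarith : (0:ℝ) ≤ 1 - c) (by ring)
  simpa [Real.sinh_zero, smul_eq_mul] using h



theorem stmt11 (a ε : ℝ) (ha : 0 ≤ a) (hε : 0 < ε) (n : ℤ) (hn : n ≠ 0)
    (hle : |n| ≤ nbar ε) (t : ℝ) (ht : 0 ≤ t) :
    |Hfun a ε n t| ≤ 1 / |(n : ℝ)| := by
  have hcast : (n : ℝ) ≠ 0 := Int.cast_ne_zero.2 hn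
  have hn2 : (0:ℝ) < (n:ℝ)^2 := by positivity
  have hnabs : 0 < |(n:ℝ)| := abs_pos.2 hcast
  set h := hcoef a ε n with hhdef
  have hh0 : (0:ℝ) ≤ h := by
    have h1 : (0:ℝ) ≤ ε * (n:ℝ)^2 := by positivity
    simp only [hhdef, hcoef]; linarith
  rw [Hfun]
  split_ifs with hc1 hc2
  · -- sinh case
    set ω := Real.sqrt (h^2 - (n:ℝ)^2) with hωdef
    have hω0 : 0 < ω := Real.sqrt_pos.2 hc1
    have hω2 : ω^2 = h^2 - (n:ℝ)^2 := Real.sq_sqrt hc1.le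
    have hnh : |(n:ℝ)| ≤ h := by
      have h2 : (n:ℝ)^2 ≤ h^2 := by linarith
      calc |(n:ℝ)| = Real.sqrt ((n:ℝ)^2) := (Real.sqrt_sq_eq_abs _).symm
        _ ≤ Real.sqrt (h^2) := Real.sqrt_le_sqrt h2
        _ = h := Real.sqrt_sq hh0
    have hhpos : 0 < h := lt_of_lt_of_le hnabs hnh
    have hωh : ω ≤ h := by nlinarith
    have hst : Real.sinh (ω * t) ≤ (ω/h) * Real.sinh (h * t) := by
      have := sinh_mul_le (c := ω/h) (x := h*t) (by positivity)
        ((div_le_one hhpos).2 hωh) (by positivity)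
      rwa [show ω/h*(h*t) = ω*t by field_simp] at this
    have hsE : Real.sinh (h*t) ≤ Real.exp (h*t) := by
      have := Real.sinh_eq (h*t)
      linarith [Real.exp_pos (-(h*t)), Real.exp_pos (h*t)]
    have hEinv : Real.exp (-h*t) = (Real.exp (h*t))⁻¹ := by
      rw [← Real.exp_neg]; ring_nf
    have hsinh0 : 0 ≤ Real.sinh (ω * t) := Real.sinh_nonneg_iff.2 (by positivity)
    have hnum : 0 ≤ Real.exp (-h*t) * Real.sinh (ω*t) := by positivity
    rw [abs_of_nonneg (by positivity), div_le_div_iff₀ hω0 hnabs, one_mul]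
    have hE : 0 < Real.exp (h*t) := Real.exp_pos _
    calc Real.exp (-h*t) * Real.sinh (ω*t) * |(n:ℝ)|
        ≤ (Real.exp (h*t))⁻¹ * ((ω/h) * Real.exp (h*t)) * h := by
          rw [hEinv]
          apply mul_le_mul _ hnh (abs_nonneg _) (by positivity)
          apply mul_le_mul_of_nonneg_left _ (by positivity)
          exact hst.trans (mul_le_mul_of_nonneg_left hsE (by positivity))
      _ = ω * ((Real.exp (h*t))⁻¹ * Real.exp (h*t)) * (h * h⁻¹) := by ring
      _ = ω * ((Real.exp (h*t))⁻¹ * Real.exp (h*t)) := by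
          rw [mul_inv_cancel₀ hhpos.ne', mul_one]
      _ = ω := by rw [inv_mul_cancel₀ hE.ne', mul_one]
  · -- sin case
    set β := Real.sqrt ((n:ℝ)^2 - h^2) with hβdef
    have hβ0 : 0 < β := Real.sqrt_pos.2 (by linarith)
    have hβ2 : β^2 = (n:ℝ)^2 - h^2 := Real.sq_sqrt (by linarith)
    have hE : 0 < Real.exp (h*t) := Real.exp_pos _
    have hEinv : Real.exp (-h*t) = (Real.exp (h*t))⁻¹ := by
      rw [← Real.exp_neg]; ring_nf
    have hsq : ((n:ℝ) * Real.sin (β*t))^2 ≤ (β * Real.exp (h*t))^2 := by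
      have h1 : (Real.sin (β*t))^2 ≤ 1 := Real.sin_sq_le_one _
      have h2 : (Real.sin (β*t))^2 ≤ (β*t)^2 := by
        have := Real.abs_sin_le_abs (x := β*t)
        have h3 : |Real.sin (β*t)| ≤ β*t := this.trans_eq (abs_of_nonneg (by positivity))
        nlinarith [abs_nonneg (Real.sin (β*t)), sq_abs (Real.sin (β*t))]
      have h4 : (1 + h*t)^2 ≤ (Real.exp (h*t))^2 :=
        pow_le_pow_left₀ (by positivity) (Real.add_one_le_exp _ |>.trans_eq' (by ring)) 2
      nlinarith [mul_nonneg hh0 ht, sq_nonneg (h*t), sq_nonneg (Real.sin (β*t)),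
        mul_nonneg (mul_nonneg hh0 ht) (sq_nonneg (Real.sin (β*t)))]
    have hkey : |(n:ℝ)| * |Real.sin (β*t)| ≤ β * Real.exp (h*t) := by
      apply le_of_pow_le_pow_left₀ two_ne_zero (by positivity)
      calc (|(n:ℝ)| * |Real.sin (β*t)|)^2 = ((n:ℝ) * Real.sin (β*t))^2 := by
            rw [mul_pow, mul_pow, sq_abs, sq_abs]
        _ ≤ (β * Real.exp (h*t))^2 := hsq
    rw [abs_div, abs_of_pos hβ0, div_le_div_iff₀ hβ0 hnabs, one_mul, abs_mul,
      abs_of_pos (Real.exp_pos _), hEinv]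
    calc (Real.exp (h*t))⁻¹ * |Real.sin (β*t)| * |(n:ℝ)|
        ≤ (Real.exp (h*t))⁻¹ * (β * Real.exp (h*t)) := by
          rw [mul_assoc]
          apply mul_le_mul_of_nonneg_left _ (by positivity)
          rw [mul_comm]; exact hkey
      _ = β * ((Real.exp (h*t))⁻¹ * Real.exp (h*t)) := by ring
      _ = β := by rw [inv_mul_cancel₀ hE.ne', mul_one]
  · -- degenerate case
    have heq : h^2 = (n:ℝ)^2 := le_antisymm (by linarith) (by linarith)
    have hhn : h = |(n:ℝ)| := by
      calc h = Real.sqrt (h^2) := (Real.sqrt_sq hh0).symm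
        _ = Real.sqrt ((n:ℝ)^2) := by rw [heq]
        _ = |(n:ℝ)| := Real.sqrt_sq_eq_abs _
    have hhpos : 0 < h := hhn ▸ hnabs
    have hE : 0 < Real.exp (h*t) := Real.exp_pos _
    have hEinv : Real.exp (-h*t) = (Real.exp (h*t))⁻¹ := by
      rw [← Real.exp_neg]; ring_nf
    rw [abs_of_nonneg (by positivity), ← hhn, hEinv]
    calc (Real.exp (h*t))⁻¹ * t ≤ (Real.exp (h*t))⁻¹ * (Real.exp (h*t)/h) := by
          apply mul_le_mul_of_nonneg_left _ (by positivity)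
          rw [le_div_iff₀ hhpos]
          linarith [Real.add_one_le_exp (h*t)]
      _ = 1/h := by field_simp
end

section
/- Let a ≥ 0, ε > 0. For all t ≥ 0, the squared ℓ² norm of the sequence (n H_n(t))_{n∈ℤ} satisfies Σ_{n∈ℤ} |n H_n(t)|² < 2 + 4/ε + 4π²/(3ε²). -/
/-!
Every `H_n(t)` with `h_n > 0` is bounded by `1 / h_n`: in the oscillatory and critical regimes
`|sin x| ≤ |x|` reduces this to `t e^{-h t} ≤ 1 / (2h)`, and in the overdamped regime one uses either
`sinh x ≤ e^x / 2` (when `ω ≥ h / 2`) or `sinh x ≤ x e^x` (when the decay rate `h - ω` exceeds `h / 2`).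
Since `h_n ≥ ε n² / 2`, this gives `|n H_n(t)|² ≤ 4 / (ε² n²)` for all `n`, and summing over `ℤ`
with `∑ 1 / n² = π² / 3` bounds the whole sum by `4π² / (3ε²)`.
-/

open Real

-- The `n = 0` term is `1 / 0 = 0`.
theorem hasSum_int_one_div_sq : HasSum (fun n : ℤ => 1 / (n : ℝ) ^ 2) (π ^ 2 / 3) := by
  have h := hasSum_zeta_two.of_nat_of_neg (f := fun n : ℤ => 1 / (n : ℝ) ^ 2)
    (g' := π ^ 2 / 6) (by simpa using hasSum_zeta_two)
  have hval : π ^ 2 / 6 + π ^ 2 / 6 - 1 / ((0 : ℤ) : ℝ) ^ 2 = π ^ 2 / 3 := by norm_num; ring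
  exact hval ▸ h

theorem two_mul_le_exp (x : ℝ) : 2 * x ≤ exp x := by
  rcases le_or_gt 0 x with hx | hx
  · nlinarith [quadratic_le_exp_of_nonneg hx, sq_nonneg (x - 1)]
  · linarith [exp_pos x]

theorem mul_exp_neg_mul_le {c : ℝ} (hc : 0 < c) (t : ℝ) : t * exp (-(c * t)) ≤ 1 / (2 * c) := by
  rw [le_div_iff₀ (by positivity)]
  calc t * exp (-(c * t)) * (2 * c) = 2 * (c * t) * exp (-(c * t)) := by ring
    _ ≤ exp (c * t) * exp (-(c * t)) := by gcongr; exact two_mul_le_exp _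
    _ = 1 := by rw [← exp_add, add_neg_cancel, exp_zero]

theorem sinh_le_mul_exp (x : ℝ) : sinh x ≤ x * exp x := by
  have h := add_one_le_exp (-(2 * x))
  have hsplit : exp (-x) = exp x * exp (-(2 * x)) := by rw [← exp_add]; ring_nf
  rw [sinh_eq, hsplit]
  nlinarith [exp_pos x]

theorem abs_exp_neg_mul_mul_sinh_div_le {h ω t : ℝ} (hω : 0 < ω) (hωh : ω ≤ h) (ht : 0 ≤ t) :
    |exp (-h * t) * sinh (ω * t) / ω| ≤ 1 / h := by
  have hpos : 0 ≤ exp (-h * t) * sinh (ω * t) / ω := by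
    have := sinh_nonneg_iff.mpr (mul_nonneg hω.le ht)
    positivity
  rw [abs_of_nonneg hpos]
  rcases le_or_gt h (2 * ω) with hsmall | hlarge
  · have hdecay : exp (-h * t) * exp (ω * t) ≤ 1 := by
      rw [← exp_add, exp_le_one_iff]; nlinarith
    have hsinh : 2 * sinh (ω * t) ≤ exp (ω * t) := by
      linarith [cosh_add_sinh (ω * t), sinh_lt_cosh (ω * t)]
    have hhalf : exp (-h * t) * sinh (ω * t) ≤ 1 / 2 := by
      nlinarith [mul_le_mul_of_nonneg_left hsinh (exp_pos (-h * t)).le]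
    calc exp (-h * t) * sinh (ω * t) / ω ≤ 1 / 2 / ω := by gcongr
      _ = 1 / (2 * ω) := by rw [div_div]
      _ ≤ 1 / h := one_div_le_one_div_of_le (by linarith) hsmall
  · have hgap : 0 < h - ω := by linarith
    calc exp (-h * t) * sinh (ω * t) / ω
        ≤ exp (-h * t) * (ω * t * exp (ω * t)) / ω := by
          gcongr; exact sinh_le_mul_exp _
      _ = t * exp (-((h - ω) * t)) := by
          field_simp; rw [mul_assoc, ← exp_add]; ring_nf
      _ ≤ 1 / (2 * (h - ω)) := mul_exp_neg_mul_le hgap t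
      _ ≤ 1 / h := one_div_le_one_div_of_le (by linarith) (by linarith)

theorem abs_exp_neg_mul_mul_sin_div_le {h t : ℝ} (hh : 0 < h) (ht : 0 ≤ t) (μ : ℝ) :
    |exp (-h * t) * sin (μ * t) / μ| ≤ 1 / (2 * h) := by
  have hsin : |sin (μ * t) / μ| ≤ t := by
    rcases eq_or_ne μ 0 with rfl | hμ
    · simpa using ht
    rw [abs_div, div_le_iff₀ (abs_pos.mpr hμ)]
    calc |sin (μ * t)| ≤ |μ * t| := abs_sin_le_abs
      _ = t * |μ| := by rw [abs_mul, abs_of_nonneg ht, mul_comm]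
  calc |exp (-h * t) * sin (μ * t) / μ| = exp (-(h * t)) * |sin (μ * t) / μ| := by
        rw [mul_div_assoc, abs_mul, abs_exp, neg_mul]
    _ ≤ exp (-(h * t)) * t := by gcongr
    _ ≤ 1 / (2 * h) := by rw [mul_comm]; exact mul_exp_neg_mul_le hh t

theorem abs_exp_neg_mul_mul_self_le {h t : ℝ} (hh : 0 < h) (ht : 0 ≤ t) :
    |exp (-h * t) * t| ≤ 1 / (2 * h) := by
  rw [abs_of_nonneg (by positivity), mul_comm, neg_mul]
  exact mul_exp_neg_mul_le hh t

theorem abs_Hfun_le_one_div_hcoef {a ε : ℝ} {n : ℤ} {t : ℝ} (hh : 0 < hcoef a ε n) (ht : 0 ≤ t) :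
    |Hfun a ε n t| ≤ 1 / hcoef a ε n := by
  have hhalf : 1 / (2 * hcoef a ε n) ≤ 1 / hcoef a ε n :=
    one_div_le_one_div_of_le hh (by linarith)
  unfold Hfun
  split_ifs with hhyp
  · refine abs_exp_neg_mul_mul_sinh_div_le (sqrt_pos.mpr hhyp) ?_ ht
    calc √(hcoef a ε n ^ 2 - (n : ℝ) ^ 2) ≤ √(hcoef a ε n ^ 2) := sqrt_le_sqrt (by nlinarith)
      _ = hcoef a ε n := sqrt_sq hh.le
  · exact (abs_exp_neg_mul_mul_sin_div_le hh ht _).trans hhalf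
  · exact (abs_exp_neg_mul_mul_self_le hh ht).trans hhalf

theorem abs_Hfun_le {a ε : ℝ} (ha : 0 ≤ a) (hε : 0 < ε) {n : ℤ} (hn : n ≠ 0) {t : ℝ} (ht : 0 ≤ t) :
    |Hfun a ε n t| ≤ 2 / (ε * (n : ℝ) ^ 2) := by
  have hεn : 0 < ε * (n : ℝ) ^ 2 := by positivity
  have hh : ε * (n : ℝ) ^ 2 / 2 ≤ hcoef a ε n := by unfold hcoef; linarith
  calc |Hfun a ε n t| ≤ 1 / hcoef a ε n := abs_Hfun_le_one_div_hcoef (by linarith) ht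
    _ ≤ 1 / (ε * (n : ℝ) ^ 2 / 2) := one_div_le_one_div_of_le (by positivity) hh
    _ = 2 / (ε * (n : ℝ) ^ 2) := by rw [one_div_div]

theorem sq_intCast_mul_Hfun_le {a ε : ℝ} (ha : 0 ≤ a) (hε : 0 < ε) (n : ℤ) {t : ℝ} (ht : 0 ≤ t) :
    ((n : ℝ) * Hfun a ε n t) ^ 2 ≤ 4 / ε ^ 2 * (1 / (n : ℝ) ^ 2) := by
  rcases eq_or_ne n 0 with rfl | hn
  · simp
  calc ((n : ℝ) * Hfun a ε n t) ^ 2 = (n : ℝ) ^ 2 * |Hfun a ε n t| ^ 2 := by rw [mul_pow, sq_abs]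
    _ ≤ (n : ℝ) ^ 2 * (2 / (ε * (n : ℝ) ^ 2)) ^ 2 := by
        gcongr; exact abs_Hfun_le ha hε hn ht
    _ = 4 / ε ^ 2 * (1 / (n : ℝ) ^ 2) := by field_simp; ring

theorem stmt15 (a ε : ℝ) (ha : 0 ≤ a) (hε : 0 < ε) (t : ℝ) (ht : 0 ≤ t) :
    Summable (fun n : ℤ => ((n : ℝ) * Hfun a ε n t) ^ 2) ∧
    (∑' n : ℤ, ((n : ℝ) * Hfun a ε n t) ^ 2) <
      2 + 4 / ε + 4 * Real.pi ^ 2 / (3 * ε ^ 2) := by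
  have hmajorant := hasSum_int_one_div_sq.mul_left (4 / ε ^ 2)
  have hle := fun n : ℤ => sq_intCast_mul_Hfun_le ha hε n ht
  have hsum := hmajorant.summable.of_nonneg_of_le (fun _ => sq_nonneg _) hle
  refine ⟨hsum, ?_⟩
  calc (∑' n : ℤ, ((n : ℝ) * Hfun a ε n t) ^ 2) ≤ 4 / ε ^ 2 * (π ^ 2 / 3) :=
        hasSum_le hle hsum.hasSum hmajorant
    _ = 4 * π ^ 2 / (3 * ε ^ 2) := by ring
    _ < 2 + 4 / ε + 4 * π ^ 2 / (3 * ε ^ 2) := by linarith [div_pos four_pos hε]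
end
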